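/- arXiv:1912.01424 — 5 statements merged into one kernel-verified Lean document; each statement's English description precedes it below -/
import Mathlib

section
/- Let p be a prime and define F(t) = ∏_{n ≥ 1, p ∤ n} (1 − t^n)^{μ(n)/n} in ℚ[[t]]. Then F(t) = exp(−∑_{m ≥ 0} t^{p^m}/p^m). -/
open PowerSeries

/-- The logarithm of a formal power series with constant term `1`:
`log f = -∑_{k ≥ 1} (1 - f)^k / k`. -/
noncomputable def pslog (f : PowerSeries ℚ) : PowerSeries ℚ :=
  PowerSeries.mk fun n => -∑ k ∈ Finset.Icc 1 n, (PowerSeries.coeff (R := ℚ) n ((1 - f) ^ k)) / k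

/-- The exponential of a formal power series with constant term `0`:
`exp g = ∑_{k ≥ 0} g^k / k!`. -/
noncomputable def psexp (g : PowerSeries ℚ) : PowerSeries ℚ :=
  PowerSeries.mk fun n =>
    ∑ k ∈ Finset.range (n + 1), (PowerSeries.coeff n (g ^ k)) / (Nat.factorial k)

/-- The rational power `f^r = exp (r · log f)` of a formal power series `f` with
constant term `1`. -/
noncomputable def psrpow (f : PowerSeries ℚ) (r : ℚ) : PowerSeries ℚ :=
  psexp (r • pslog f)


section Aux
open Finset
open scoped ArithmeticFunction.Moebius

lemma coeff_psexp (g : PowerSeries ℚ) (n : ℕ) :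
    coeff n (psexp g) = ∑ k ∈ Finset.range (n + 1), (coeff n (g ^ k)) / (Nat.factorial k) := by
  simp [psexp]

lemma constCoeff_pslog (f : PowerSeries ℚ) : constantCoeff (pslog f) = 0 := by
  rw [← coeff_zero_eq_constantCoeff_apply]
  simp [pslog]

lemma coeff_pow_eq_zero {g : PowerSeries ℚ} (hg : constantCoeff g = 0)
    {n k : ℕ} (h : n < k) : coeff n (g ^ k) = 0 := by
  have hd : (X : PowerSeries ℚ) ^ k ∣ g ^ k :=
    pow_dvd_pow_of_dvd (X_dvd_iff.mpr hg) k
  exact (X_pow_dvd_iff.mp hd) n h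

lemma coeff_mul_pow_eq_zero {g h : PowerSeries ℚ} (hg : constantCoeff g = 0)
    (hh : constantCoeff h = 0) {n k l : ℕ} (hn : n < k + l) :
    coeff n (g ^ k * h ^ l) = 0 := by
  have hd : (X : PowerSeries ℚ) ^ (k + l) ∣ g ^ k * h ^ l := by
    rw [pow_add]
    exact mul_dvd_mul (pow_dvd_pow_of_dvd (X_dvd_iff.mpr hg) k)
      (pow_dvd_pow_of_dvd (X_dvd_iff.mpr hh) l)
  exact (X_pow_dvd_iff.mp hd) n hn

lemma psexp_zero : psexp 0 = 1 := by
  ext n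
  rw [coeff_psexp]
  rcases Nat.eq_zero_or_pos n with rfl | hn
  · simp
  · rw [coeff_one, if_neg hn.ne']
    apply Finset.sum_eq_zero
    intro k hk
    rcases Nat.eq_zero_or_pos k with rfl | hk'
    · simp [coeff_one, hn.ne']
    · rw [zero_pow hk'.ne']
      simp

lemma choose_div_factorial (m k : ℕ) (h : k ≤ m) :
    (m.choose k : ℚ) / m.factorial = ((k.factorial : ℚ))⁻¹ * (((m - k).factorial : ℚ))⁻¹ := by
  have h2 : ((m.choose k : ℚ)) * (k.factorial) * ((m - k).factorial) = m.factorial := by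
    exact_mod_cast congrArg (Nat.cast : ℕ → ℚ) (Nat.choose_mul_factorial_mul_factorial h)
  have hk : (k.factorial : ℚ) ≠ 0 := by exact_mod_cast k.factorial_ne_zero
  have hmk : ((m - k).factorial : ℚ) ≠ 0 := by exact_mod_cast (m - k).factorial_ne_zero
  have hm : (m.factorial : ℚ) ≠ 0 := by exact_mod_cast m.factorial_ne_zero
  field_simp
  linarith [h2]

lemma psexp_add {g h : PowerSeries ℚ} (hg : constantCoeff g = 0)
    (hh : constantCoeff h = 0) : psexp (g + h) = psexp g * psexp h := by
  ext n
  set F : ℕ → ℕ → ℚ := fun k l =>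
    coeff n (g ^ k * h ^ l) * ((k.factorial : ℚ))⁻¹ * ((l.factorial : ℚ))⁻¹ with hF
  have hFzero : ∀ k l : ℕ, n < k + l → F k l = 0 := by
    intro k l hn
    rw [hF]
    simp [coeff_mul_pow_eq_zero hg hh hn]
  -- LHS
  have hlhs : coeff n (psexp (g + h))
      = ∑ m ∈ range (n + 1), ∑ k ∈ range (m + 1), F k (m - k) := by
    rw [coeff_psexp]
    refine Finset.sum_congr rfl fun m _ => ?_
    rw [add_pow, map_sum, Finset.sum_div]
    refine Finset.sum_congr rfl fun k hk => ?_
    rw [Finset.mem_range] at hk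
    have hk' : k ≤ m := by omega
    rw [hF, ← map_natCast C (m.choose k), coeff_mul_C, mul_div_assoc,
      choose_div_factorial m k hk', ← mul_assoc]
  -- triangular reindex
  have tri : ∑ m ∈ range (n + 1), ∑ k ∈ range (m + 1), F k (m - k)
      = ∑ k ∈ range (n + 1), ∑ l ∈ range (n + 1), F k l := by
    rw [Finset.sum_sigma', ← Finset.sum_product']
    rw [← Finset.sum_filter_add_sum_filter_not (range (n + 1) ×ˢ range (n + 1))
      (fun p => p.1 + p.2 ≤ n)]
    have h2 : ∑ p ∈ (range (n + 1) ×ˢ range (n + 1)).filter (fun p => ¬ p.1 + p.2 ≤ n),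
        F p.1 p.2 = 0 := by
      refine Finset.sum_eq_zero fun p hp => ?_
      rw [Finset.mem_filter] at hp
      exact hFzero p.1 p.2 (by omega)
    rw [h2, add_zero]
    refine Finset.sum_nbij' (fun x => (x.2, x.1 - x.2)) (fun p => ⟨p.1 + p.2, p.1⟩)
      ?_ ?_ ?_ ?_ ?_
    · rintro ⟨m, k⟩ hx
      simp only [Finset.mem_sigma, Finset.mem_range] at hx
      simp only [Finset.mem_filter, Finset.mem_product, Finset.mem_range]
      omega
    · rintro ⟨k, l⟩ hp
      simp only [Finset.mem_filter, Finset.mem_product, Finset.mem_range] at hp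
      simp only [Finset.mem_sigma, Finset.mem_range]
      omega
    · rintro ⟨m, k⟩ hx
      simp only [Finset.mem_sigma, Finset.mem_range] at hx
      simp only [Sigma.mk.inj_iff]
      constructor
      · omega
      · exact HEq.rfl
    · rintro ⟨k, l⟩ hp
      simp
    · rintro ⟨m, k⟩ hx
      simp only [Finset.mem_sigma, Finset.mem_range] at hx
      rfl
  -- RHS
  have hext : ∀ (f : PowerSeries ℚ), constantCoeff f = 0 → ∀ i, i ≤ n →
      coeff i (psexp f) = ∑ k ∈ range (n + 1), coeff i (f ^ k) / k.factorial := by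
    intro f hf i hi
    rw [coeff_psexp]
    refine Finset.sum_subset (Finset.range_subset_range.mpr (by omega)) fun k _ hk2 => ?_
    rw [Finset.mem_range, not_lt] at hk2
    rw [coeff_pow_eq_zero hf (by omega)]
    simp
  have hrhs : coeff n (psexp g * psexp h)
      = ∑ k ∈ range (n + 1), ∑ l ∈ range (n + 1), F k l := by
    rw [coeff_mul]
    have step : ∀ p ∈ Finset.HasAntidiagonal.antidiagonal n,
        coeff p.1 (psexp g) * coeff p.2 (psexp h)
        = ∑ k ∈ range (n + 1), ∑ l ∈ range (n + 1),
            (coeff p.1 (g ^ k) * coeff p.2 (h ^ l)) *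
              (((k.factorial : ℚ))⁻¹ * ((l.factorial : ℚ))⁻¹) := by
      intro p hp
      rw [Finset.HasAntidiagonal.mem_antidiagonal] at hp
      rw [hext g hg p.1 (by omega), hext h hh p.2 (by omega), Finset.sum_mul_sum]
      refine Finset.sum_congr rfl fun k _ => Finset.sum_congr rfl fun l _ => ?_
      rw [div_mul_div_comm, div_eq_mul_inv, mul_inv]
    rw [Finset.sum_congr rfl step, Finset.sum_comm]
    refine Finset.sum_congr rfl fun k _ => ?_
    rw [Finset.sum_comm]
    refine Finset.sum_congr rfl fun l _ => ?_
    simp only [hF]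
    rw [← Finset.sum_mul, ← coeff_mul, mul_assoc]
  rw [hlhs, tri, hrhs]

lemma coeff_pow_congr {g h : PowerSeries ℚ} {N : ℕ}
    (hgh : ∀ m ≤ N, coeff m g = coeff m h) (k : ℕ) :
    ∀ m ≤ N, coeff m (g ^ k) = coeff m (h ^ k) := by
  induction k with
  | zero => intro m _; simp
  | succ k ih =>
    intro m hm
    rw [pow_succ, pow_succ, coeff_mul, coeff_mul]
    refine Finset.sum_congr rfl fun p hp => ?_
    rw [Finset.HasAntidiagonal.mem_antidiagonal] at hp
    rw [ih p.1 (by omega), hgh p.2 (by omega)]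

lemma trunc_psexp_congr {g h : PowerSeries ℚ} {N : ℕ}
    (hgh : ∀ m ≤ N, coeff m g = coeff m h) :
    trunc (N + 1) (psexp g) = trunc (N + 1) (psexp h) := by
  apply Polynomial.ext
  intro m
  rw [coeff_trunc, coeff_trunc]
  split_ifs with hm
  · rw [coeff_psexp, coeff_psexp]
    exact Finset.sum_congr rfl fun k _ => by
      rw [coeff_pow_congr hgh k m (by omega)]
  · rfl

lemma coeff_pslog_one_sub_X_pow (n : ℕ) (hn : 0 < n) (m : ℕ) :
    coeff m (pslog (1 - X ^ n)) =
      if n ∣ m ∧ m ≠ 0 then -((n : ℚ) / m) else 0 := by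
  have h1 : (1 : ℚ⟦X⟧) - (1 - X ^ n) = X ^ n := by ring
  rw [pslog, coeff_mk, h1]
  simp only [← pow_mul, coeff_X_pow]
  split_ifs with hcond
  · obtain ⟨⟨c, rfl⟩, hm0⟩ := hcond
    have hc : 1 ≤ c := by
      rcases Nat.eq_zero_or_pos c with rfl | h
      · simp at hm0
      · exact h
    rw [Finset.sum_eq_single_of_mem c
      (Finset.mem_Icc.mpr ⟨hc, Nat.le_mul_of_pos_left c hn⟩)]
    · rw [if_pos rfl, Nat.cast_mul]
      have hn' : (n : ℚ) ≠ 0 := Nat.cast_ne_zero.mpr hn.ne'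
      have hc' : (c : ℚ) ≠ 0 := Nat.cast_ne_zero.mpr (by omega)
      field_simp
    · intro k hk hkc
      rw [if_neg, zero_div]
      intro he
      exact hkc (Nat.eq_of_mul_eq_mul_left hn he.symm)
  · push_neg at hcond
    rw [neg_eq_zero]
    refine Finset.sum_eq_zero fun k hk => ?_
    rw [Finset.mem_Icc] at hk
    rw [if_neg, zero_div]
    intro he
    have hm0 : m = 0 := hcond ⟨k, he⟩
    omega

lemma sum_moebius_divisors (m : ℕ) :
    ∑ d ∈ m.divisors, μ d = if m = 1 then 1 else 0 := by
  rw [← ArithmeticFunction.coe_mul_zeta_apply, ArithmeticFunction.moebius_mul_coe_zeta,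
    ArithmeticFunction.one_apply]

open scoped Classical in
lemma sum_moebius_not_dvd (p : ℕ) (hp : p.Prime) (m : ℕ) (hm : 0 < m) :
    ∑ d ∈ m.divisors.filter (fun d => ¬ p ∣ d), μ d
      = if ∃ a, m = p ^ a then 1 else 0 := by
  classical
  have hm0 : m ≠ 0 := hm.ne'
  have hfil : m.divisors.filter (fun d => ¬ p ∣ d) = ((m / p ^ m.factorization p)).divisors := by
    ext d
    simp only [Finset.mem_filter, Nat.mem_divisors]
    constructor
    · rintro ⟨⟨hdm, _⟩, hpd⟩
      refine ⟨?_, Nat.ordCompl_pos p hm0 |>.ne'⟩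
      have hcop : Nat.Coprime d (p ^ m.factorization p) :=
        Nat.Coprime.pow_right _ ((Nat.Prime.coprime_iff_not_dvd hp).mpr hpd).symm
      refine hcop.dvd_of_dvd_mul_left ?_
      rwa [Nat.ordProj_mul_ordCompl_eq_self]
    · rintro ⟨hdm, _⟩
      refine ⟨⟨hdm.trans (Nat.ordCompl_dvd m p), hm0⟩, fun hpd => ?_⟩
      exact Nat.not_dvd_ordCompl hp hm0 (hpd.trans hdm)
  rw [hfil, sum_moebius_divisors]
  have hiff : ((m / p ^ m.factorization p) = 1) ↔ (∃ a, m = p ^ a) := by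
    constructor
    · intro h1
      refine ⟨m.factorization p, ?_⟩
      conv_lhs => rw [← Nat.ordProj_mul_ordCompl_eq_self m p]
      rw [h1, mul_one]
    · rintro ⟨a, rfl⟩
      rw [Nat.Prime.factorization_pow hp, Finsupp.single_eq_same, Nat.div_self]
      exact pow_pos hp.pos a
  simp only [hiff]

lemma prod_psexp {α : Type*} (s : Finset α) (g : α → PowerSeries ℚ)
    (h : ∀ i ∈ s, constantCoeff (g i) = 0) :
    ∏ i ∈ s, psexp (g i) = psexp (∑ i ∈ s, g i) := by
  classical
  induction s using Finset.induction with
  | empty => simp [psexp_zero]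
  | @insert a s ha ih =>
    rw [Finset.prod_insert ha, Finset.sum_insert ha,
      ih (fun i hi => h i (Finset.mem_insert_of_mem hi)),
      ← psexp_add (h a (Finset.mem_insert_self a s))]
    rw [map_sum]
    exact Finset.sum_eq_zero fun i hi => h i (Finset.mem_insert_of_mem hi)

lemma constCoeff_smul_pslog (r : ℚ) (f : PowerSeries ℚ) :
    constantCoeff (r • pslog f) = 0 := by
  rw [← coeff_zero_eq_constantCoeff_apply, map_smul, coeff_zero_eq_constantCoeff_apply,
    constCoeff_pslog, smul_zero]


end Aux

open scoped ArithmeticFunction.Moebius in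
/-- Let `p` be a prime and `F(t) = ∏_{n ≥ 1, p ∤ n} (1 - t^n)^{μ(n)/n}` in `ℚ⟦t⟧`.
Then `F(t) = exp (-∑_{m ≥ 0} t^{p^m} / p^m)`.  Both the infinite product and the
infinite sum converge `t`-adically, so the identity is expressed by the equality of
all truncations of the corresponding partial products/sums: the factors with `n > N`
and the summands with `p^m > N` do not affect coefficients in degrees `≤ N`. -/
theorem prod_one_sub_pow_moebius_div_eq_exp (p : ℕ) (hp : p.Prime) :
    ∀ N : ℕ,
      PowerSeries.trunc (N + 1)
          (∏ n ∈ (Finset.Icc 1 N).filter (fun n => ¬ p ∣ n),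
            psrpow (1 - (X : PowerSeries ℚ) ^ n) ((μ n : ℚ) / (n : ℚ))) =
        PowerSeries.trunc (N + 1)
          (psexp (-∑ m ∈ Finset.range (N + 1),
            ((1 : ℚ) / (p ^ m : ℚ)) • (X : PowerSeries ℚ) ^ (p ^ m))) := by
  classical
  intro N
  set S := (Finset.Icc 1 N).filter (fun n => ¬ p ∣ n) with hS
  have hprod : ∏ n ∈ S, psrpow (1 - (X : PowerSeries ℚ) ^ n) ((μ n : ℚ) / (n : ℚ))
      = psexp (∑ n ∈ S, ((μ n : ℚ) / (n : ℚ)) • pslog (1 - (X : PowerSeries ℚ) ^ n)) := by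
    rw [← prod_psexp S _ (fun i _ => constCoeff_smul_pslog _ _)]
    rfl
  rw [hprod]
  apply trunc_psexp_congr
  intro m hm
  have hcoeffA : coeff m (∑ n ∈ S, ((μ n : ℚ) / (n : ℚ)) • pslog (1 - (X : PowerSeries ℚ) ^ n))
      = ∑ n ∈ S, ((μ n : ℚ) / (n : ℚ)) *
          (if n ∣ m ∧ m ≠ 0 then -((n : ℚ) / m) else 0) := by
    rw [map_sum]
    refine Finset.sum_congr rfl fun n hn => ?_
    have hn1 : 0 < n := by
      rw [hS, Finset.mem_filter, Finset.mem_Icc] at hn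
      omega
    rw [map_smul, coeff_pslog_one_sub_X_pow n hn1 m, smul_eq_mul]
  have hcoeffB : coeff m (-∑ a ∈ Finset.range (N + 1),
        ((1 : ℚ) / (p ^ a : ℚ)) • (X : PowerSeries ℚ) ^ (p ^ a))
      = -∑ a ∈ Finset.range (N + 1),
          ((1 : ℚ) / (p ^ a : ℚ)) * (if m = p ^ a then 1 else 0) := by
    rw [map_neg, map_sum]
    refine congrArg Neg.neg (Finset.sum_congr rfl fun a _ => ?_)
    rw [map_smul, coeff_X_pow, smul_eq_mul]
  rw [hcoeffA, hcoeffB]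
  rcases Nat.eq_zero_or_pos m with rfl | hm1
  · rw [Finset.sum_eq_zero fun n _ => by simp, Finset.sum_eq_zero, neg_zero]
    intro a _
    have : (0 : ℕ) ≠ p ^ a := (pow_pos hp.pos a).ne
    rw [if_neg this, mul_zero]
  · -- m ≥ 1
    have hmQ : (m : ℚ) ≠ 0 := Nat.cast_ne_zero.mpr hm1.ne'
    -- LHS
    have hLHS : ∑ n ∈ S, ((μ n : ℚ) / (n : ℚ)) *
          (if n ∣ m ∧ m ≠ 0 then -((n : ℚ) / m) else 0)
        = -((∑ d ∈ m.divisors.filter (fun d => ¬ p ∣ d), μ d : ℤ) : ℚ) / m := by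
      rw [← Finset.sum_filter_add_sum_filter_not S (fun n => n ∣ m)]
      have h2 : ∑ n ∈ S.filter (fun n => ¬ n ∣ m), ((μ n : ℚ) / (n : ℚ)) *
          (if n ∣ m ∧ m ≠ 0 then -((n : ℚ) / m) else 0) = 0 := by
        refine Finset.sum_eq_zero fun n hn => ?_
        rw [Finset.mem_filter] at hn
        rw [if_neg (fun hc => hn.2 hc.1), mul_zero]
      rw [h2, add_zero]
      have hsets : S.filter (fun n => n ∣ m) = m.divisors.filter (fun d => ¬ p ∣ d) := by
        ext n
        rw [hS]
        simp only [Finset.mem_filter, Finset.mem_Icc, Nat.mem_divisors]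
        constructor
        · rintro ⟨⟨_, hpn⟩, hnm⟩
          exact ⟨⟨hnm, hm1.ne'⟩, hpn⟩
        · rintro ⟨⟨hnm, _⟩, hpn⟩
          have h1 : 1 ≤ n := Nat.pos_of_dvd_of_pos hnm hm1
          exact ⟨⟨⟨h1, (Nat.le_of_dvd hm1 hnm).trans hm⟩, hpn⟩, hnm⟩
      rw [hsets, Int.cast_sum, neg_div, Finset.sum_div, ← Finset.sum_neg_distrib]
      refine Finset.sum_congr rfl fun n hn => ?_
      rw [Finset.mem_filter, Nat.mem_divisors] at hn
      have hn0 : (n : ℚ) ≠ 0 :=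
        Nat.cast_ne_zero.mpr (Nat.pos_of_dvd_of_pos hn.1.1 hm1).ne'
      rw [if_pos ⟨hn.1.1, hm1.ne'⟩]
      field_simp
    rw [hLHS, sum_moebius_not_dvd p hp m hm1]
    by_cases hpow : ∃ a, m = p ^ a
    · obtain ⟨a, rfl⟩ := hpow
      have haN : a ∈ Finset.range (N + 1) := by
        have : a < p ^ a := Nat.lt_pow_self (n := a) hp.one_lt
        rw [Finset.mem_range]
        omega
      rw [if_pos ⟨a, rfl⟩]
      rw [Finset.sum_eq_single_of_mem a haN]
      · rw [if_pos rfl, mul_one]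
        push_cast
        ring
      · intro b _ hb
        rw [if_neg, mul_zero]
        intro he
        exact hb (Nat.pow_right_injective hp.two_le he.symm)
    · rw [if_neg hpow]
      rw [Finset.sum_eq_zero, neg_zero]
      · simp
      · intro a _
        rw [if_neg (fun he => hpow ⟨a, he⟩), mul_zero]
end

section
/- Let R be a complete noetherian local ring with maximal ideal 𝔪 and perfect residue field k of characteristic p > 0. Then there exists a unique multiplicative section τ : k → R of the quotient map R → k, i.e. a unique map with τ(xy) = τ(x)τ(y) for all x, y ∈ k and τ(x) mod 𝔪 = x; moreover for any set-theoretic section s : k → R, τ(x) = lim_{n→∞} s(x^{p^{−n}})^{p^n} in the 𝔪-adic topology. -/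
open IsLocalRing

/-! Lift `x^(p^-n)` arbitrarily to `R` and raise the lift to the `p^n`-th power. Two lifts
differ by an element of `𝔪`, and raising to the `p`-th power multiplies the congruence by `𝔪`
because `p ∈ 𝔪`; so the result is well defined modulo `𝔪^(n+1)`. These approximations form an
`𝔪`-adic Cauchy sequence whose limit is multiplicative, and any multiplicative section agrees
with the `n`-th approximation modulo `𝔪^(n+1)`, which gives both uniqueness and the limit
formula. -/

namespace Ideal

variable {R : Type*} [CommRing R] {I : Ideal R} {p : ℕ} {a b : R}

theorem pow_sub_pow_mem_mul (hp : (p : R) ∈ I) (hI : a - b ∈ I) {J : Ideal R} (hJ : a - b ∈ J) :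
    a ^ p - b ^ p ∈ I * J := by
  rw [← geom_sum₂_mul]
  refine mul_mem_mul ?_ hJ
  have hab : Quotient.mk I a = Quotient.mk I b := Quotient.eq.mpr hI
  have hp' : (p : R ⧸ I) = 0 := by rwa [← map_natCast (Quotient.mk I), Quotient.eq_zero_iff_mem]
  rw [← Quotient.eq_zero_iff_mem, map_sum]
  simp only [map_mul, map_pow, hab, geom_sum₂_self, hp', zero_mul]

theorem pow_pow_sub_pow_pow_mem_pow (hp : (p : R) ∈ I) (hI : a - b ∈ I) (n : ℕ) :
    a ^ p ^ n - b ^ p ^ n ∈ I ^ (n + 1) := by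
  induction n with
  | zero => simpa using hI
  | succ n ih =>
    rw [pow_succ p, pow_mul, pow_mul, pow_succ' I]
    exact pow_sub_pow_mem_mul hp (pow_le_self n.succ_ne_zero ih) ih

end Ideal

theorem IsHausdorff.eq_of_forall_sub_mem_pow {R : Type*} [CommRing R] {I : Ideal R}
    [IsHausdorff I R] {a b : R} (h : ∀ n, a - b ∈ I ^ n) : a = b :=
  (IsHausdorff.eq_iff_smodEq (I := I)).mpr fun n ↦ by
    rw [SModEq.sub_mem, smul_eq_mul, Ideal.mul_top]
    exact h n

theorem IsPrecomplete.exists_forall_sub_mem_pow {R : Type*} [CommRing R] {I : Ideal R}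
    [IsPrecomplete I R] {f : ℕ → R} (hf : ∀ {m n}, m ≤ n → f m - f n ∈ I ^ m) :
    ∃ L, ∀ n, f n - L ∈ I ^ n := by
  obtain ⟨L, hL⟩ := IsPrecomplete.prec ‹_› (f := f) fun hmn ↦ by
    rw [SModEq.sub_mem, smul_eq_mul, Ideal.mul_top]
    exact hf hmn
  refine ⟨L, fun n ↦ ?_⟩
  simpa only [SModEq.sub_mem, smul_eq_mul, Ideal.mul_top] using hL n

theorem map_pow_of_map_mul {M N : Type*} [Monoid M] [Monoid N] {f : M → N}
    (hf : ∀ x y, f (x * y) = f x * f y) (x : M) {k : ℕ} (hk : k ≠ 0) : f (x ^ k) = f x ^ k := by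
  obtain ⟨k, rfl⟩ := Nat.exists_eq_add_one_of_ne_zero hk
  clear hk
  induction k with
  | zero => simp
  | succ k ih => rw [pow_succ, hf, ih, ← pow_succ]

theorem iterate_frobeniusEquiv_symm_pow_p_pow_sub {K : Type*} [CommSemiring K] (p : ℕ)
    [ExpChar K p] [PerfectRing K p] (x : K) {m n : ℕ} (hmn : m ≤ n) :
    (frobeniusEquiv K p).symm^[n] x ^ p ^ (n - m) = (frobeniusEquiv K p).symm^[m] x := by
  rw [← Nat.sub_add_cancel hmn, Function.iterate_add_apply, Nat.add_sub_cancel,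
    iterate_frobeniusEquiv_symm_pow_p_pow]

namespace IsLocalRing

variable {R : Type*} [CommRing R] [IsLocalRing R] (p : ℕ)

theorem pow_pow_sub_pow_pow_mem_maximalIdeal_pow [CharP (ResidueField R) p] {a b : R}
    (h : residue R a = residue R b) (n : ℕ) :
    a ^ p ^ n - b ^ p ^ n ∈ maximalIdeal R ^ (n + 1) :=
  Ideal.pow_pow_sub_pow_pow_mem_pow
    ((residue_eq_zero_iff _).mp (by rw [map_natCast, CharP.cast_eq_zero]))
    (Ideal.Quotient.eq.mp h) n

def IsMultiplicativeSection (τ : ResidueField R → R) : Prop :=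
  (∀ x y, τ (x * y) = τ x * τ y) ∧ ∀ x, residue R (τ x) = x

section Approximation

variable [Fact p.Prime] [CharP (ResidueField R) p] [PerfectRing (ResidueField R) p]

noncomputable def teichmullerApprox (s : ResidueField R → R) (x : ResidueField R) (n : ℕ) : R :=
  s ((frobeniusEquiv (ResidueField R) p).symm^[n] x) ^ p ^ n

variable {p}

theorem teichmullerApprox_sub_mem {s : ResidueField R → R} (hs : ∀ x, residue R (s x) = x)
    (x : ResidueField R) {m n : ℕ} (hmn : m ≤ n) :
    teichmullerApprox p s x m - teichmullerApprox p s x n ∈ maximalIdeal R ^ (m + 1) := by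
  have hpow : teichmullerApprox p s x n =
      (s ((frobeniusEquiv _ p).symm^[n] x) ^ p ^ (n - m)) ^ p ^ m := by
    rw [teichmullerApprox, ← pow_mul, ← pow_add, Nat.sub_add_cancel hmn]
  rw [hpow]
  refine pow_pow_sub_pow_pow_mem_maximalIdeal_pow p ?_ m
  rw [hs, map_pow, hs, iterate_frobeniusEquiv_symm_pow_p_pow_sub p x hmn]

theorem teichmullerApprox_mul_sub_mem {s : ResidueField R → R} (hs : ∀ x, residue R (s x) = x)
    (x y : ResidueField R) (n : ℕ) :
    teichmullerApprox p s (x * y) n - teichmullerApprox p s x n * teichmullerApprox p s y n ∈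
      maximalIdeal R ^ (n + 1) := by
  rw [teichmullerApprox, teichmullerApprox, teichmullerApprox, ← mul_pow]
  refine pow_pow_sub_pow_pow_mem_maximalIdeal_pow p ?_ n
  rw [hs, map_mul, hs, hs, iterate_map_mul]

theorem teichmullerApprox_of_map_mul {τ : ResidueField R → R}
    (hτ : ∀ x y, τ (x * y) = τ x * τ y) (x : ResidueField R) (n : ℕ) :
    teichmullerApprox p τ x n = τ x := by
  rw [teichmullerApprox, ← map_pow_of_map_mul hτ _ (pow_ne_zero n (Fact.out : p.Prime).ne_zero),
    iterate_frobeniusEquiv_symm_pow_p_pow]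

theorem teichmullerApprox_sub_mem_of_isMultiplicativeSection {τ : ResidueField R → R}
    (hτ : IsMultiplicativeSection τ) {s : ResidueField R → R} (hs : ∀ x, residue R (s x) = x)
    (x : ResidueField R) (n : ℕ) :
    teichmullerApprox p s x n - τ x ∈ maximalIdeal R ^ (n + 1) := by
  rw [← teichmullerApprox_of_map_mul hτ.1 x n]
  exact pow_pow_sub_pow_pow_mem_maximalIdeal_pow p (by rw [hs, hτ.2]) n

end Approximation

theorem IsMultiplicativeSection.eq (p : ℕ) [Fact p.Prime] [CharP (ResidueField R) p]
    [PerfectRing (ResidueField R) p] [IsHausdorff (maximalIdeal R) R] {τ τ' : ResidueField R → R}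
    (hτ : IsMultiplicativeSection τ) (hτ' : IsMultiplicativeSection τ') : τ = τ' := by
  funext x
  refine IsHausdorff.eq_of_forall_sub_mem_pow (I := maximalIdeal R) fun n ↦
    Ideal.pow_le_pow_right n.le_succ ?_
  simpa only [teichmullerApprox_of_map_mul hτ.1] using
    teichmullerApprox_sub_mem_of_isMultiplicativeSection hτ' hτ.2 x n

theorem exists_isMultiplicativeSection (p : ℕ) [Fact p.Prime] [CharP (ResidueField R) p]
    [PerfectRing (ResidueField R) p] [IsAdicComplete (maximalIdeal R) R] :
    ∃ τ : ResidueField R → R, IsMultiplicativeSection τ := by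
  obtain ⟨s, hs⟩ : ∃ s : ResidueField R → R, ∀ x, residue R (s x) = x :=
    ⟨_, Function.surjInv_eq residue_surjective⟩
  choose τ hτ using fun x ↦ IsPrecomplete.exists_forall_sub_mem_pow
    fun hmn ↦ Ideal.pow_le_pow_right (Nat.le_succ _) (teichmullerApprox_sub_mem (p := p) hs x hmn)
  refine ⟨τ, fun x y ↦ ?_, fun x ↦ ?_⟩
  · refine IsHausdorff.eq_of_forall_sub_mem_pow (I := maximalIdeal R) fun n ↦ ?_
    simp only [← Ideal.Quotient.eq] at hτ ⊢
    calc Ideal.Quotient.mk _ (τ (x * y))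
        = Ideal.Quotient.mk _ (teichmullerApprox p s (x * y) n) := (hτ (x * y) n).symm
      _ = Ideal.Quotient.mk _ (teichmullerApprox p s x n * teichmullerApprox p s y n) :=
          Ideal.Quotient.eq.mpr <| Ideal.pow_le_pow_right n.le_succ <|
            teichmullerApprox_mul_sub_mem hs x y n
      _ = Ideal.Quotient.mk _ (τ x * τ y) := by rw [map_mul, map_mul, hτ x n, hτ y n]
  · have hres : residue R (teichmullerApprox p s x 1) = residue R (τ x) :=
      Ideal.Quotient.eq.mpr (by simpa using hτ x 1)
    rw [← hres, teichmullerApprox, map_pow, hs, pow_one, Function.iterate_one,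
      frobeniusEquiv_symm_pow_p]

end IsLocalRing

theorem exists_unique_teichmuller_section_general (R : Type*) [CommRing R] [IsLocalRing R]
    [IsAdicComplete (maximalIdeal R) R]
    (p : ℕ) [Fact p.Prime] [CharP (ResidueField R) p] [PerfectRing (ResidueField R) p] :
    (∃! τ : ResidueField R → R,
        (∀ x y : ResidueField R, τ (x * y) = τ x * τ y) ∧
        (∀ x : ResidueField R, residue R (τ x) = x)) ∧
      (∀ τ : ResidueField R → R,
        (∀ x y : ResidueField R, τ (x * y) = τ x * τ y) →
        (∀ x : ResidueField R, residue R (τ x) = x) →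
        ∀ s : ResidueField R → R, (∀ x, residue R (s x) = x) →
          ∀ x : ResidueField R, ∀ m : ℕ, ∃ N : ℕ, ∀ n ≥ N,
            s (((frobeniusEquiv (ResidueField R) p).symm)^[n] x) ^ p ^ n - τ x ∈
              maximalIdeal R ^ m) := by
  obtain ⟨τ, hτ⟩ := exists_isMultiplicativeSection (R := R) p
  refine ⟨⟨τ, hτ, fun τ' hτ' ↦ IsMultiplicativeSection.eq p hτ' hτ⟩, ?_⟩
  intro τ hmul hsec s hs x m
  exact ⟨m, fun n hn ↦ Ideal.pow_le_pow_right (by omega)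
    (teichmullerApprox_sub_mem_of_isMultiplicativeSection ⟨hmul, hsec⟩ hs x n)⟩

/-- Let `R` be a complete noetherian local ring with maximal ideal `𝔪` and perfect
residue field `k` of characteristic `p > 0`.  Then there is a unique multiplicative
section `τ : k → R` of the quotient map `R → k`; moreover, for every set-theoretic
section `s : k → R` and every `x ∈ k` one has `τ x = lim_{n → ∞} s(x^{p^{-n}})^{p^n}`
in the `𝔪`-adic topology (i.e. the difference eventually lies in every power of `𝔪`). -/
theorem exists_unique_teichmuller_section (R : Type*) [CommRing R] [IsLocalRing R]
    [IsNoetherianRing R] [IsAdicComplete (maximalIdeal R) R]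
    (p : ℕ) [Fact p.Prime] [CharP (ResidueField R) p] [PerfectRing (ResidueField R) p] :
    (∃! τ : ResidueField R → R,
        (∀ x y : ResidueField R, τ (x * y) = τ x * τ y) ∧
        (∀ x : ResidueField R, residue R (τ x) = x)) ∧
      (∀ τ : ResidueField R → R,
        (∀ x y : ResidueField R, τ (x * y) = τ x * τ y) →
        (∀ x : ResidueField R, residue R (τ x) = x) →
        ∀ s : ResidueField R → R, (∀ x, residue R (s x) = x) →
          ∀ x : ResidueField R, ∀ m : ℕ, ∃ N : ℕ, ∀ n ≥ N,
            s (((frobeniusEquiv (ResidueField R) p).symm)^[n] x) ^ p ^ n - τ x ∈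
              maximalIdeal R ^ m) :=
  exists_unique_teichmuller_section_general R p
end

section
/- Let l ≥ 1 and let ε : ZMod l → ℤ be a function taking values in {−1, 0, 1}, viewed as a cyclic sequence (indices taken modulo l). Fix n ≥ 1. Call a pair (s, t) of integers with s ≤ t < s + l a free linear segment of level n if: ε(s) = −1, ε(t) = 1, ∑_{i=s}^{t} ε(i) = 0, for all j with s ≤ j < t one has −n ≤ ∑_{i=s}^{j} ε(i) < 0, and there exists j₀ with s ≤ j₀ < t and ∑_{i=s}^{j₀} ε(i) = −n. Then no two distinct free linear segments of level n have the same starting index s (mod l), and no two have the same ending index t (mod l). -/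
/-!
A free segment starting at `s` ends at the first `t > s` where the partial sum from `s`
returns to `0`, so its start determines its end. Conversely, if two free segments ended
at the same `t` with starts `s₁ < s₂`, the vanishing sum over `[s₁, t]` would split into
the partial sum over `[s₁, s₂ - 1]`, which is negative, plus the vanishing sum over
`[s₂, t]`. Since the sequence is `l`-periodic, translating a free segment by a multiple
of `l` gives a free segment, which reduces congruent endpoints to equal ones.
-/

/-- `(s, t)` is a free linear segment of level `n` of the cyclic sequence
`ε : ZMod l → ℤ` (indices taken modulo `l`): `s ≤ t < s + l`, `ε s = -1`, `ε t = 1`,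
the total sum over `[s, t]` is `0`, all proper partial sums lie in `[-n, 0)`, and
some partial sum equals `-n`. -/
def IsFreeSegment (l : ℕ) (ε : ZMod l → ℤ) (n : ℕ) (s t : ℤ) : Prop :=
  s ≤ t ∧ t < s + l ∧ ε (s : ZMod l) = -1 ∧ ε (t : ZMod l) = 1 ∧
    (∑ i ∈ Finset.Icc s t, ε (i : ZMod l)) = 0 ∧
    (∀ j : ℤ, s ≤ j → j < t →
      -(n : ℤ) ≤ (∑ i ∈ Finset.Icc s j, ε (i : ZMod l)) ∧
        (∑ i ∈ Finset.Icc s j, ε (i : ZMod l)) < 0) ∧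
    (∃ j₀ : ℤ, s ≤ j₀ ∧ j₀ < t ∧ (∑ i ∈ Finset.Icc s j₀, ε (i : ZMod l)) = -(n : ℤ))

open Finset

lemma sum_Icc_eq_sum_Icc_sub_one_add_sum_Icc {M : Type*} [AddCommMonoid M] (f : ℤ → M)
    {a b c : ℤ} (hab : a ≤ b) (hbc : b ≤ c + 1) :
    ∑ i ∈ Icc a c, f i = ∑ i ∈ Icc a (b - 1), f i + ∑ i ∈ Icc b c, f i := by
  rw [← sum_union (disjoint_left.mpr fun i hi hi' => by simp only [mem_Icc] at hi hi'; omega)]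
  congr 1
  ext i
  simp only [mem_Icc, mem_union]
  omega

lemma sum_Icc_intCast_add_of_dvd {M : Type*} [AddCommMonoid M] {l : ℕ} (ε : ZMod l → M)
    (a b : ℤ) {d : ℤ} (hd : (l : ℤ) ∣ d) :
    ∑ i ∈ Icc (a + d) (b + d), ε (i : ZMod l) = ∑ i ∈ Icc a b, ε (i : ZMod l) := by
  have hd0 : (d : ZMod l) = 0 := (ZMod.intCast_zmod_eq_zero_iff_dvd d l).mpr hd
  rw [← map_add_right_Icc, sum_map]
  simp [hd0]

namespace IsFreeSegment

variable {l : ℕ} {ε : ZMod l → ℤ} {n : ℕ}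

lemma add_of_dvd {s t d : ℤ} (h : IsFreeSegment l ε n s t) (hd : (l : ℤ) ∣ d) :
    IsFreeSegment l ε n (s + d) (t + d) := by
  obtain ⟨hst, hlen, hs, ht, hsum, hpartial, j₀, hsj₀, hj₀t, hj₀⟩ := h
  have hcast (a : ℤ) : ((a + d : ℤ) : ZMod l) = a := by
    simp [(ZMod.intCast_zmod_eq_zero_iff_dvd d l).mpr hd]
  have hpartial_sum (j : ℤ) :
      ∑ i ∈ Icc (s + d) j, ε (i : ZMod l) = ∑ i ∈ Icc s (j - d), ε (i : ZMod l) := by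
    simpa using sum_Icc_intCast_add_of_dvd ε s (j - d) hd
  refine ⟨by omega, by omega, by rwa [hcast], by rwa [hcast],
    by rwa [sum_Icc_intCast_add_of_dvd ε s t hd], fun j hsj hjt => ?_,
    j₀ + d, by omega, by omega, by rwa [sum_Icc_intCast_add_of_dvd ε s j₀ hd]⟩
  rw [hpartial_sum]
  exact hpartial (j - d) (by omega) (by omega)

lemma sum_eq_zero {s t : ℤ} (h : IsFreeSegment l ε n s t) :
    ∑ i ∈ Icc s t, ε (i : ZMod l) = 0 :=
  h.2.2.2.2.1

lemma partialSum_neg {s t j : ℤ} (h : IsFreeSegment l ε n s t) (hsj : s ≤ j) (hjt : j < t) :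
    ∑ i ∈ Icc s j, ε (i : ZMod l) < 0 :=
  (h.2.2.2.2.2.1 j hsj hjt).2

lemma end_unique {s t₁ t₂ : ℤ} (h₁ : IsFreeSegment l ε n s t₁)
    (h₂ : IsFreeSegment l ε n s t₂) : t₁ = t₂ := by
  have not_lt_of_free {t t' : ℤ} (h : IsFreeSegment l ε n s t) (h' : IsFreeSegment l ε n s t') :
      ¬ t < t' := fun hlt => (h'.partialSum_neg h.1 hlt).ne h.sum_eq_zero
  exact le_antisymm (not_lt.mp (not_lt_of_free h₂ h₁)) (not_lt.mp (not_lt_of_free h₁ h₂))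

lemma start_unique {s₁ s₂ t : ℤ} (h₁ : IsFreeSegment l ε n s₁ t)
    (h₂ : IsFreeSegment l ε n s₂ t) : s₁ = s₂ := by
  have not_lt_of_free {s s' : ℤ} (h : IsFreeSegment l ε n s t) (h' : IsFreeSegment l ε n s' t) :
      ¬ s < s' := fun hlt => by
    have hsplit := sum_Icc_eq_sum_Icc_sub_one_add_sum_Icc (fun i : ℤ => ε i) (c := t) hlt.le
      (by have := h'.1; omega)
    have hneg := h.partialSum_neg (j := s' - 1) (by omega) (by have := h'.1; omega)
    rw [h.sum_eq_zero, h'.sum_eq_zero] at hsplit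
    omega
  exact le_antisymm (not_lt.mp (not_lt_of_free h₂ h₁)) (not_lt.mp (not_lt_of_free h₁ h₂))

end IsFreeSegment

theorem freeSegment_start_end_unique_general (l : ℕ) (ε : ZMod l → ℤ)
    (n : ℕ)
    (s₁ t₁ s₂ t₂ : ℤ) (h₁ : IsFreeSegment l ε n s₁ t₁) (h₂ : IsFreeSegment l ε n s₂ t₂) :
    ((s₁ : ZMod l) = (s₂ : ZMod l) → t₁ - s₁ = t₂ - s₂) ∧
      ((t₁ : ZMod l) = (t₂ : ZMod l) → t₁ - s₁ = t₂ - s₂) := by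
  constructor
  · intro hs
    have h₂' := h₂.add_of_dvd ((ZMod.intCast_eq_intCast_iff_dvd_sub s₂ s₁ l).mp hs.symm)
    rw [add_sub_cancel] at h₂'
    have := h₁.end_unique h₂'
    omega
  · intro ht
    have h₂' := h₂.add_of_dvd ((ZMod.intCast_eq_intCast_iff_dvd_sub t₂ t₁ l).mp ht.symm)
    rw [add_sub_cancel] at h₂'
    have := h₁.start_unique h₂'
    omega

/-- No two distinct free linear segments of level `n` of a cyclic `{-1,0,1}`-valued
sequence have the same starting index mod `l`, and no two have the same ending index
mod `l`: if the starting (resp. ending) indices agree modulo `l`, the segments coincide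
up to the cyclic identification, i.e. they have the same length `t - s`. -/
theorem freeSegment_start_end_unique (l : ℕ) (hl : 1 ≤ l) (ε : ZMod l → ℤ)
    (hε : ∀ i, ε i = -1 ∨ ε i = 0 ∨ ε i = 1) (n : ℕ) (hn : 1 ≤ n)
    (s₁ t₁ s₂ t₂ : ℤ) (h₁ : IsFreeSegment l ε n s₁ t₁) (h₂ : IsFreeSegment l ε n s₂ t₂) :
    ((s₁ : ZMod l) = (s₂ : ZMod l) → t₁ - s₁ = t₂ - s₂) ∧
      ((t₁ : ZMod l) = (t₂ : ZMod l) → t₁ - s₁ = t₂ - s₂) :=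
  freeSegment_start_end_unique_general l ε n s₁ t₁ s₂ t₂ h₁ h₂
end

section
/- Let ε : ZMod l → {−1, 0, 1} be a cyclic sequence and for n ≥ 1 let a_n(ε) denote the number of free linear segments of level n of ε (counted up to the cyclic identification). Then for every m ≥ 1, a_{m+1}(ε) ≤ a_m(ε); that is, the number of free linear segments of level m+1 is at most the number of level m. -/
/-- The number `a_n(ε)` of free linear segments of level `n` of the cyclic sequence
`ε`, counted up to the cyclic identification: each class has a unique representative
with starting index in `[0, l)`. -/
noncomputable def segCount (l : ℕ) (ε : ZMod l → ℤ) (n : ℕ) : ℕ :=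
  Nat.card {st : ℤ × ℤ // 0 ≤ st.1 ∧ st.1 < l ∧ IsFreeSegment l ε n st.1 st.2}

noncomputable def partialSum {l : ℕ} (ε : ZMod l → ℤ) (s j : ℤ) : ℤ :=
  ∑ i ∈ Finset.Icc s j, ε (i : ZMod l)

section PartialSum

variable {l : ℕ} (ε : ZMod l → ℤ)

theorem partialSum_self (s : ℤ) : partialSum ε s s = ε s := by
  simp [partialSum]

theorem partialSum_add_one {s j : ℤ} (h : s ≤ j + 1) :
    partialSum ε s (j + 1) = partialSum ε s j + ε ((j + 1 : ℤ) : ZMod l) := by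
  rw [partialSum, ← Finset.insert_Icc_right_eq_Icc_add_one h,
    Finset.sum_insert (by simp), add_comm, partialSum]

theorem partialSum_split {s a j : ℤ} (hs : s ≤ a) (hj : a ≤ j) :
    partialSum ε s j = partialSum ε s a + partialSum ε (a + 1) j := by
  rw [partialSum, partialSum, partialSum, ← Finset.sum_union]
  · congr 1
    ext x
    simp only [Finset.mem_Icc, Finset.mem_union]
    omega
  · simp only [Finset.disjoint_left, Finset.mem_Icc]
    omega

theorem partialSum_add_mul (s j k : ℤ) :
    partialSum ε (s + l * k) (j + l * k) = partialSum ε s j := by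
  rw [partialSum, ← Finset.map_add_right_Icc, Finset.sum_map, partialSum]
  simp

end PartialSum

namespace IsFreeSegment

variable {l : ℕ} {ε : ZMod l → ℤ} {n n' : ℕ} {s t s' t' : ℤ}

theorem lt (h : IsFreeSegment l ε n s t) : s < t := by
  obtain ⟨hst, -, hs, ht, -⟩ := h
  rcases hst.lt_or_eq with hst | rfl
  · exact hst
  · omega

theorem lt_add (h : IsFreeSegment l ε n s t) : t < s + l :=
  h.2.1

theorem pos (h : IsFreeSegment l ε n s t) : 0 < l := by
  have := h.lt_add
  have := h.lt
  omega

theorem partialSum_end (h : IsFreeSegment l ε n s t) : partialSum ε s t = 0 :=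
  h.2.2.2.2.1

theorem partialSum_neg_s12 (h : IsFreeSegment l ε n s t) {j : ℤ} (hs : s ≤ j) (ht : j < t) :
    partialSum ε s j < 0 :=
  (h.2.2.2.2.2.1 j hs ht).2

theorem neg_le_partialSum (h : IsFreeSegment l ε n s t) {j : ℤ} (hs : s ≤ j) (ht : j < t) :
    -(n : ℤ) ≤ partialSum ε s j :=
  (h.2.2.2.2.2.1 j hs ht).1

theorem exists_partialSum_eq_neg (h : IsFreeSegment l ε n s t) :
    ∃ j₀, s ≤ j₀ ∧ j₀ < t ∧ partialSum ε s j₀ = -(n : ℤ) :=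
  h.2.2.2.2.2.2

theorem partialSum_sub_one (h : IsFreeSegment l ε n s t) : partialSum ε s (t - 1) = -1 := by
  have := partialSum_add_one ε (j := t - 1) (s := s) (by linarith [h.lt])
  rw [sub_add_cancel, h.partialSum_end, h.2.2.2.1] at this
  linarith

theorem add_mul (h : IsFreeSegment l ε n s t) (k : ℤ) :
    IsFreeSegment l ε n (s + l * k) (t + l * k) := by
  obtain ⟨hst, htl, hs, ht, hsum, hbound, j₀, hj₀s, hj₀t, hj₀⟩ := h
  have hcast (x : ℤ) : ((x + l * k : ℤ) : ZMod l) = x := by simp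
  refine ⟨by omega, by omega, by rwa [hcast], by rwa [hcast], ?_, fun j hjs hjt => ?_,
    j₀ + l * k, by omega, by omega, ?_⟩
  · exact (partialSum_add_mul ε s t k).trans hsum
  · have hj : j = j - l * k + l * k := by ring
    change -(n : ℤ) ≤ partialSum ε _ j ∧ partialSum ε _ j < 0
    rw [hj, partialSum_add_mul]
    exact hbound (j - l * k) (by omega) (by omega)
  · exact (partialSum_add_mul ε s j₀ k).trans hj₀

theorem partialSum_lt (h : IsFreeSegment l ε n s t) {j : ℤ} (hs : s < s') (hj : s' ≤ j)
    (ht : j < t) : partialSum ε s j < partialSum ε s' j := by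
  have hsplit := partialSum_split ε (s := s) (a := s' - 1) (j := j) (by omega) (by omega)
  rw [sub_add_cancel] at hsplit
  linarith [h.partialSum_neg_s12 (j := s' - 1) (by omega) (by omega)]

theorem end_unique_s12 (h : IsFreeSegment l ε n s t) (h' : IsFreeSegment l ε n' s t') : t = t' := by
  by_contra hne
  rcases lt_or_gt_of_ne hne with hlt | hlt
  · exact (h'.partialSum_neg_s12 h.lt.le hlt).ne h.partialSum_end
  · exact (h.partialSum_neg_s12 h'.lt.le hlt).ne h'.partialSum_end

theorem eq_of_partialSum_eq (h : IsFreeSegment l ε n s t) (h' : IsFreeSegment l ε n' s' t')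
    {a : ℤ} (ha : s ≤ a ∧ a < t) (ha' : s' ≤ a ∧ a < t')
    (hsum : partialSum ε s a = partialSum ε s' a) : s = s' ∧ t = t' := by
  have hs : s = s' := by
    rcases lt_trichotomy s s' with hlt | heq | hlt
    · exact absurd hsum (h.partialSum_lt hlt ha'.1 ha.2).ne
    · exact heq
    · exact absurd hsum.symm (h'.partialSum_lt hlt ha.1 ha'.2).ne
  subst hs
  exact ⟨rfl, h.end_unique_s12 h'⟩

theorem sub_mul_ediv (h : IsFreeSegment l ε n s t) :
    0 ≤ s - l * (s / l) ∧ s - l * (s / l) < l ∧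
      IsFreeSegment l ε n (s - l * (s / l)) (t - l * (s / l)) := by
  have hl : (0 : ℤ) < l := by exact_mod_cast h.pos
  rw [← Int.emod_def]
  refine ⟨Int.emod_nonneg _ hl.ne', Int.emod_lt_of_pos _ hl, ?_⟩
  simpa [Int.emod_def, sub_eq_add_neg, ← mul_neg] using h.add_mul (-(s / l))

theorem eq_of_partialSum_eq_add_mul (h : IsFreeSegment l ε n s t)
    (h' : IsFreeSegment l ε n' s' t') (hs : 0 ≤ s ∧ s < l) (hs' : 0 ≤ s' ∧ s' < l)
    {a k : ℤ} (ha : s ≤ a ∧ a < t) (ha' : s' ≤ a + l * k ∧ a + l * k < t')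
    (hsum : partialSum ε s a = partialSum ε s' (a + l * k)) : s = s' ∧ t = t' := by
  obtain ⟨hs₁, ht₁⟩ := (h.add_mul k).eq_of_partialSum_eq h' (by omega) ha'
    (by rwa [partialSum_add_mul])
  have hk : (l : ℤ) * k = 0 :=
    Int.eq_zero_of_abs_lt_dvd (dvd_mul_right _ _) (abs_lt.2 ⟨by omega, by omega⟩)
  omega

end IsFreeSegment

section Trim

variable {l : ℕ} {ε : ZMod l → ℤ} {n m : ℕ} {s t : ℤ}

theorem isFreeSegment_of_partialSum (hε : ∀ i, ε i = -1 ∨ ε i = 0 ∨ ε i = 1)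
    (hst : s < t) (htl : t < s + l) (ht : partialSum ε s t = 0)
    (hbound : ∀ j, s ≤ j → j < t → -(n : ℤ) ≤ partialSum ε s j ∧ partialSum ε s j < 0)
    (hmin : ∃ j₀, s ≤ j₀ ∧ j₀ < t ∧ partialSum ε s j₀ = -(n : ℤ)) :
    IsFreeSegment l ε n s t := by
  have hs : ε s = -1 := by
    have := (hbound s le_rfl hst).2
    rw [partialSum_self] at this
    rcases hε s with h | h | h <;> omega
  have hstep := partialSum_add_one ε (s := s) (j := t - 1) (by omega)
  rw [sub_add_cancel, ht] at hstep
  have ht' : ε t = 1 := by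
    have := (hbound (t - 1) (by omega) (by omega)).2
    rcases hε t with h | h | h <;> omega
  exact ⟨hst.le, htl, hs, ht', ht, hbound, hmin⟩

theorem IsFreeSegment.exists_trim (h : IsFreeSegment l ε (m + 1) s t)
    (hε : ∀ i, ε i = -1 ∨ ε i = 0 ∨ ε i = 1) (hm : 1 ≤ m) :
    ∃ a b, s ≤ a ∧ a < t ∧ partialSum ε s a = -1 ∧ IsFreeSegment l ε m (a + 1) b := by
  obtain ⟨j₀, hj₀s, hj₀t, hj₀⟩ := h.exists_partialSum_eq_neg
  push_cast at hj₀
  obtain ⟨a, ⟨has, haj₀, ha⟩, ha_max⟩ := Int.exists_greatest_of_bdd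
    (P := fun j => s ≤ j ∧ j ≤ j₀ ∧ partialSum ε s j = -1) ⟨j₀, fun j hj => hj.2.1⟩
    ⟨s, le_rfl, hj₀s, by rw [partialSum_self]; exact h.2.2.1⟩
  obtain ⟨b, ⟨hj₀b, hbt, hb⟩, hb_min⟩ := Int.exists_least_of_bdd
    (P := fun j => j₀ ≤ j ∧ j < t ∧ partialSum ε s j = -1) ⟨j₀, fun j hj => hj.1⟩
    ⟨t - 1, by omega, by omega, h.partialSum_sub_one⟩
  have hgap : ∀ j, a < j → j < b → partialSum ε s j ≤ -2 := by
    intro j haj hjb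
    have hne : partialSum ε s j ≠ -1 := fun hj => by
      rcases le_or_gt j j₀ with hjj₀ | hjj₀
      · exact absurd (ha_max j ⟨by omega, hjj₀, hj⟩) (by omega)
      · exact absurd (hb_min j ⟨hjj₀.le, by omega, hj⟩) (by omega)
    have := h.partialSum_neg_s12 (j := j) (by omega) (by omega)
    omega
  have hshift : ∀ j, a ≤ j → partialSum ε (a + 1) j = partialSum ε s j + 1 := by
    intro j hj
    rw [partialSum_split ε has hj, ha]
    ring
  have haj₀ : a < j₀ := lt_of_le_of_ne haj₀ (by rintro rfl; omega)
  have hj₀b : j₀ < b := lt_of_le_of_ne hj₀b (by rintro rfl; omega)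
  refine ⟨a, b, has, by omega, ha,
    isFreeSegment_of_partialSum hε (by omega) (by linarith [h.lt_add]) ?_ ?_ ?_⟩
  · rw [hshift b (by omega), hb]
    ring
  · intro j hj hjb
    have hlow := h.neg_le_partialSum (j := j) (by omega) (by omega)
    push_cast at hlow
    have := hgap j (by omega) hjb
    rw [hshift j (by omega)]
    omega
  · exact ⟨j₀, by omega, hj₀b, by rw [hshift j₀ (by omega), hj₀]; ring⟩

end Trim

instance (l : ℕ) (ε : ZMod l → ℤ) (n : ℕ) :
    Finite {st : ℤ × ℤ // 0 ≤ st.1 ∧ st.1 < l ∧ IsFreeSegment l ε n st.1 st.2} := by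
  refine Set.Finite.to_subtype (((Set.finite_Ico 0 (l : ℤ)).prod
    (Set.finite_Ico 0 (2 * l : ℤ))).subset ?_)
  rintro ⟨s, t⟩ ⟨hs, hsl, hseg⟩
  have := hseg.lt
  have := hseg.lt_add
  simp only [Set.mem_prod, Set.mem_Ico]
  omega

theorem segCount_succ_le_general (l : ℕ) (ε : ZMod l → ℤ)
    (hε : ∀ i, ε i = -1 ∨ ε i = 0 ∨ ε i = 1) (m : ℕ) (hm : 1 ≤ m) :
    segCount l ε (m + 1) ≤ segCount l ε m := by
  choose a b has hat ha hseg using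
    fun p : {st : ℤ × ℤ // 0 ≤ st.1 ∧ st.1 < l ∧ IsFreeSegment l ε (m + 1) st.1 st.2} =>
      p.2.2.2.exists_trim hε hm
  let k p := (a p + 1) / l
  refine Nat.card_le_card_of_injective
    (fun p => ⟨(a p + 1 - l * k p, b p - l * k p), (hseg p).sub_mul_ediv⟩) ?_
  intro p q hpq
  have hstart : a p + 1 - l * k p = a q + 1 - l * k q := congrArg (·.1.1) hpq
  obtain ⟨hs, ht⟩ := p.2.2.2.eq_of_partialSum_eq_add_mul q.2.2.2 ⟨p.2.1, p.2.2.1⟩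
    ⟨q.2.1, q.2.2.1⟩ (k := k q - k p) ⟨has p, hat p⟩
    (by rw [show a p + l * (k q - k p) = a q by linarith]; exact ⟨has q, hat q⟩)
    (by rw [show a p + l * (k q - k p) = a q by linarith, ha, ha])
  exact Subtype.ext (Prod.ext hs ht)

/-- For every `m ≥ 1`, the number of free linear segments of level `m + 1` of a cyclic
`{-1,0,1}`-valued sequence is at most the number of free linear segments of level `m`:
`a_{m+1}(ε) ≤ a_m(ε)`. -/
theorem segCount_succ_le (l : ℕ) (hl : 1 ≤ l) (ε : ZMod l → ℤ)
    (hε : ∀ i, ε i = -1 ∨ ε i = 0 ∨ ε i = 1) (m : ℕ) (hm : 1 ≤ m) :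
    segCount l ε (m + 1) ≤ segCount l ε m :=
  segCount_succ_le_general l ε hε m hm
end

section
/- Let h = c + d with d = 1 and c ≥ 1, and let π be the h-cycle i ↦ i + 1 (mod h). For each of the h orbits O of (π,π) on {1,…,h}², with ε assigned by ε_{i,j} = 1 if i ≤ 1 < j, ε_{i,j} = −1 if j ≤ 1 < i, 0 otherwise: exactly one orbit (the diagonal) has ε_O identically 0, and every other orbit has ε_O containing exactly one entry equal to 1 and one entry equal to −1 and is a circular sequence of level 1 with exactly one free linear segment (of level 1). Consequently γ(m) = ∑_O ∑_{n=1}^m a_n(O) = h − 1 = c for all m ≥ 1. -/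
/-!
Along the orbit of `(a, b)` under `(π, π)` the `k`-th point is `(a + k, b + k)`, and with `d = 1`
(in `0`-based indices `i ≤ d` means `i = 0`) its sign is `[a + k = 0] - [b + k = 0]`. Over one period (of length `h`) the cyclic sign sequence of
an off-diagonal orbit is therefore zero except for a single `1` at `k = -a` and a single `-1` at
`k = -b`, so all its partial sums lie in `{-1, 0, 1}`: it is circular of level `1`, and its only
free linear segment starts at the `-1` and has level `1`. The starting points of free segments are
thus the `h - 1` points `(a, 0)` with `a ≠ 0`, whence `γ(m) = h - 1 = c`.
-/

/-- The sign sequence on `J² = {1,…,h}²` (with `0`-based indices): `ε(i,j) = 1` if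
`i ≤ d < j`, `ε(i,j) = -1` if `j ≤ d < i`, and `ε(i,j) = 0` otherwise. -/
def signOf (h d : ℕ) (x : Fin h × Fin h) : ℤ :=
  if x.1.val < d ∧ d ≤ x.2.val then 1
  else if x.2.val < d ∧ d ≤ x.1.val then -1
  else 0

/-- `x` is the starting point of a free linear segment of level `n` in the cyclic sign
sequence of the orbit of `x` under the permutation `σ`: reading off the values
`ε x, ε (σ x), ε (σ² x), …` along the orbit (whose length is the minimal period of `x`),
there is an index `t` within the period with `ε x = -1`, `ε (σ^t x) = 1`, total sum `0`
over `[0, t]`, all proper initial partial sums in `[-n, 0)`, and some initial partial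
sum equal to `-n`. -/
def StartsSegment {α : Type*} (σ : Equiv.Perm α) (ε : α → ℤ) (n : ℕ) (x : α) : Prop :=
  ε x = -1 ∧
  ∃ t : ℕ, 0 < t ∧ t < Function.minimalPeriod (⇑σ) x ∧ ε ((σ ^ t) x) = 1 ∧
    (∑ i ∈ Finset.range (t + 1), ε ((σ ^ i) x)) = 0 ∧
    (∀ j : ℕ, j < t →
      -(n : ℤ) ≤ (∑ i ∈ Finset.range (j + 1), ε ((σ ^ i) x)) ∧
        (∑ i ∈ Finset.range (j + 1), ε ((σ ^ i) x)) < 0) ∧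
    (∃ j₀ : ℕ, j₀ < t ∧ (∑ i ∈ Finset.range (j₀ + 1), ε ((σ ^ i) x)) = -(n : ℤ))

/-- `γ(m) = ∑_O ∑_{n=1}^m a_n(O)`: summing over the orbits `O` of `σ` the number
`a_n(O)` of free linear segments of level `n` of the associated cyclic sign sequence.
Since distinct free linear segments of a cyclic sequence have distinct starting
indices, `∑_O a_n(O)` equals the number of points that start a level-`n` free linear
segment in their orbit. -/
noncomputable def gammaSeq {α : Type*} (σ : Equiv.Perm α) (ε : α → ℤ) (m : ℕ) : ℕ :=
  ∑ n ∈ Finset.Icc 1 m, Nat.card {x : α // StartsSegment σ ε n x}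


/-- The cyclic sign sequence of the orbit of `x` under `σ` is circular of level `n`:
its sum over a full period `l` is `0`, every interval sum along the orbit of length at
most `l` has absolute value `≤ n`, and some interval sum attains absolute value `n`. -/
def OrbitCircularOfLevel {α : Type*} (σ : Equiv.Perm α) (ε : α → ℤ) (n : ℕ) (x : α) :
    Prop :=
  (∑ i ∈ Finset.range (Function.minimalPeriod (⇑σ) x), ε ((σ ^ i) x)) = 0 ∧
    (∀ u s : ℕ, s < Function.minimalPeriod (⇑σ) x →
      |∑ i ∈ Finset.Icc u (u + s), ε ((σ ^ i) x)| ≤ (n : ℤ)) ∧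
    (∃ u s : ℕ, s < Function.minimalPeriod (⇑σ) x ∧
      |∑ i ∈ Finset.Icc u (u + s), ε ((σ ^ i) x)| = (n : ℤ))

open Finset Function Fin.NatCast

section NatCast

variable {n : ℕ} [NeZero n]

theorem card_filter_range_natCast_eq {m : ℕ} (hm : m ≤ n) (b : Fin n) :
    ((range m).filter fun i : ℕ => (i : Fin n) = b).card = if b.val < m then 1 else 0 := by
  have hcast : (range m).filter (fun i : ℕ => (i : Fin n) = b) = (range m).filter (· = b.val) :=
    filter_congr fun i hi => by
      rw [Fin.ext_iff, Fin.val_natCast, Nat.mod_eq_of_lt (by simp at hi; omega)]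
  rw [hcast, filter_eq']
  split_ifs <;> simp_all

theorem card_filter_Icc_natCast_eq_le_one {u s : ℕ} (hs : s < n) (b : Fin n) :
    ((Icc u (u + s)).filter fun i : ℕ => (i : Fin n) = b).card ≤ 1 := by
  refine card_le_one.mpr fun i hi j hj => ?_
  simp only [mem_filter, mem_Icc] at hi hj
  have hij : i ≡ j [MOD n] := Fin.ext_iff.mp (hi.2.trans hj.2.symm)
  exact hij.eq_of_abs_lt (abs_sub_lt_iff.mpr ⟨by omega, by omega⟩)

end NatCast

abbrev rotateBoth (n : ℕ) : Equiv.Perm (Fin n × Fin n) :=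
  (finRotate n).prodCongr (finRotate n)

section RotateBoth

variable {n : ℕ}

theorem rotateBoth_pow_apply (k : ℕ) (x : Fin (n + 1) × Fin (n + 1)) :
    (rotateBoth (n + 1) ^ k) x = (x.1 + (k : Fin (n + 1)), x.2 + (k : Fin (n + 1))) := by
  induction k with
  | zero => simp
  | succ k ih =>
    rw [pow_succ', Equiv.Perm.mul_apply, ih, Equiv.prodCongr_apply, Prod.map,
      finRotate_apply, finRotate_apply, Nat.cast_succ, add_assoc, add_assoc]

theorem minimalPeriod_rotateBoth (x : Fin (n + 1) × Fin (n + 1)) :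
    minimalPeriod (rotateBoth (n + 1)) x = n + 1 := by
  have hper : ∀ k, IsPeriodicPt (rotateBoth (n + 1)) k x ↔ n + 1 ∣ k := fun k => by
    rw [IsPeriodicPt, IsFixedPt, ← Equiv.Perm.coe_pow, rotateBoth_pow_apply]
    simp [Prod.ext_iff]
  exact Nat.dvd_antisymm (isPeriodicPt_iff_minimalPeriod_dvd.mp ((hper _).mpr dvd_rfl))
    ((hper _).mp (isPeriodicPt_minimalPeriod _ x))

theorem signOf_one_apply (y : Fin (n + 1) × Fin (n + 1)) :
    signOf (n + 1) 1 y = (if y.1 = 0 then 1 else 0) - (if y.2 = 0 then 1 else 0) := by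
  simp only [signOf, Fin.ext_iff, Fin.val_zero]
  split_ifs <;> omega

theorem signOf_eq_neg_one_iff (y : Fin (n + 1) × Fin (n + 1)) :
    signOf (n + 1) 1 y = -1 ↔ y.1 ≠ 0 ∧ y.2 = 0 := by
  rw [signOf_one_apply]
  split_ifs <;> simp_all

theorem signOf_rotateBoth_pow (k : ℕ) (x : Fin (n + 1) × Fin (n + 1)) :
    signOf (n + 1) 1 ((rotateBoth (n + 1) ^ k) x) =
      (if (k : Fin (n + 1)) = -x.1 then 1 else 0) -
        (if (k : Fin (n + 1)) = -x.2 then 1 else 0) := by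
  simp only [signOf_one_apply, rotateBoth_pow_apply, add_eq_zero_iff_eq_neg']

theorem sum_signOf_rotateBoth_pow (s : Finset ℕ) (x : Fin (n + 1) × Fin (n + 1)) :
    ∑ k ∈ s, signOf (n + 1) 1 ((rotateBoth (n + 1) ^ k) x) =
      ((s.filter fun k : ℕ => (k : Fin (n + 1)) = -x.1).card : ℤ) -
        (s.filter fun k : ℕ => (k : Fin (n + 1)) = -x.2).card := by
  simp only [signOf_rotateBoth_pow, sum_sub_distrib, sum_boole]

theorem sum_range_signOf_rotateBoth_pow {m : ℕ} (hm : m ≤ n + 1)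
    (x : Fin (n + 1) × Fin (n + 1)) :
    ∑ k ∈ range m, signOf (n + 1) 1 ((rotateBoth (n + 1) ^ k) x) =
      (if (-x.1).val < m then 1 else 0) - (if (-x.2).val < m then 1 else 0) := by
  rw [sum_signOf_rotateBoth_pow, card_filter_range_natCast_eq hm,
    card_filter_range_natCast_eq hm]
  push_cast
  rfl

theorem neg_one_le_sum_range_signOf_rotateBoth_pow {m : ℕ} (hm : m ≤ n + 1)
    (x : Fin (n + 1) × Fin (n + 1)) :
    -1 ≤ ∑ k ∈ range m, signOf (n + 1) 1 ((rotateBoth (n + 1) ^ k) x) := by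
  rw [sum_range_signOf_rotateBoth_pow hm]
  split_ifs <;> norm_num

variable {x y : Fin (n + 1) × Fin (n + 1)}

theorem exists_rotateBoth_pow_apply_eq (hx : x.1 = x.2) (hy : y.1 = y.2) :
    ∃ k : ℕ, (rotateBoth (n + 1) ^ k) x = y := by
  refine ⟨(y.1 - x.1).val, ?_⟩
  rw [rotateBoth_pow_apply, Fin.cast_val_eq_self, ← hx, add_sub_cancel]
  exact Prod.ext rfl hy

theorem signOf_rotateBoth_pow_eq_one_iff (hx : x.1 ≠ x.2) (k : ℕ) :
    signOf (n + 1) 1 ((rotateBoth (n + 1) ^ k) x) = 1 ↔ (k : Fin (n + 1)) = -x.1 := by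
  have hneg : -x.1 ≠ -x.2 := neg_injective.ne hx
  rw [signOf_rotateBoth_pow]
  split_ifs <;> simp_all

theorem signOf_rotateBoth_pow_eq_neg_one_iff (hx : x.1 ≠ x.2) (k : ℕ) :
    signOf (n + 1) 1 ((rotateBoth (n + 1) ^ k) x) = -1 ↔ (k : Fin (n + 1)) = -x.2 := by
  have hneg : -x.1 ≠ -x.2 := neg_injective.ne hx
  rw [signOf_rotateBoth_pow]
  split_ifs <;> simp_all

theorem signOf_rotateBoth_pow_eq_zero_iff :
    (∀ k : ℕ, signOf (n + 1) 1 ((rotateBoth (n + 1) ^ k) x) = 0) ↔ x.1 = x.2 := by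
  refine ⟨fun h => by_contra fun hx => ?_,
    fun hx k => by rw [signOf_rotateBoth_pow, hx, sub_self]⟩
  have h₁ := h (-x.1).val
  rw [(signOf_rotateBoth_pow_eq_one_iff hx _).mpr (Fin.cast_val_eq_self _)] at h₁
  exact one_ne_zero h₁

theorem card_filter_signOf_rotateBoth_pow_eq_one (hx : x.1 ≠ x.2) :
    ((range (minimalPeriod (rotateBoth (n + 1)) x)).filter
      fun k => signOf (n + 1) 1 ((rotateBoth (n + 1) ^ k) x) = 1).card = 1 := by
  simp only [minimalPeriod_rotateBoth, signOf_rotateBoth_pow_eq_one_iff hx,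
    card_filter_range_natCast_eq le_rfl, Fin.is_lt, if_true]

theorem card_filter_signOf_rotateBoth_pow_eq_neg_one (hx : x.1 ≠ x.2) :
    ((range (minimalPeriod (rotateBoth (n + 1)) x)).filter
      fun k => signOf (n + 1) 1 ((rotateBoth (n + 1) ^ k) x) = -1).card = 1 := by
  simp only [minimalPeriod_rotateBoth, signOf_rotateBoth_pow_eq_neg_one_iff hx,
    card_filter_range_natCast_eq le_rfl, Fin.is_lt, if_true]

theorem orbitCircularOfLevel_one (hx : x.1 ≠ x.2) :
    OrbitCircularOfLevel (rotateBoth (n + 1)) (signOf (n + 1) 1) 1 x := by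
  rw [OrbitCircularOfLevel, minimalPeriod_rotateBoth]
  refine ⟨?_, fun u s hs => ?_, ⟨(-x.1).val, 0, by omega, ?_⟩⟩
  · rw [sum_range_signOf_rotateBoth_pow le_rfl, if_pos (Fin.is_lt _), if_pos (Fin.is_lt _),
      sub_self]
  · have h₁ := card_filter_Icc_natCast_eq_le_one (u := u) hs (-x.1)
    have h₂ := card_filter_Icc_natCast_eq_le_one (u := u) hs (-x.2)
    rw [sum_signOf_rotateBoth_pow, abs_le]
    omega
  · rw [add_zero, Icc_self, sum_singleton,
      (signOf_rotateBoth_pow_eq_one_iff hx _).mpr (Fin.cast_val_eq_self _)]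
    rfl

theorem startsSegment_one_iff (z : Fin (n + 1) × Fin (n + 1)) :
    StartsSegment (rotateBoth (n + 1)) (signOf (n + 1) 1) 1 z ↔ signOf (n + 1) 1 z = -1 := by
  refine ⟨And.left, fun hz => ⟨hz, ?_⟩⟩
  obtain ⟨hz₁, hz₂⟩ := (signOf_eq_neg_one_iff z).mp hz
  set p := (-z.1).val
  have hp_pos : 0 < p := Nat.pos_of_ne_zero fun h => hz₁ (neg_eq_zero.mp (Fin.ext h))
  have hp_lt : p < n + 1 := Fin.is_lt _
  -- the orbit reads `-1, 0, …, 0, 1, 0, …` with the `1` at position `p`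
  have hprefix : ∀ m, 0 < m → m ≤ n + 1 →
      ∑ k ∈ range m, signOf (n + 1) 1 ((rotateBoth (n + 1) ^ k) z) =
        if p < m then 0 else -1 := by
    intro m hm₀ hm
    rw [sum_range_signOf_rotateBoth_pow hm, hz₂, neg_zero, Fin.val_zero, if_pos hm₀]
    split_ifs <;> norm_num
  refine ⟨p, hp_pos, by rwa [minimalPeriod_rotateBoth], ?_, ?_, fun j hj => ?_, 0, hp_pos, ?_⟩
  · exact (signOf_rotateBoth_pow_eq_one_iff (hz₂ ▸ hz₁) _).mpr (Fin.cast_val_eq_self _)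
  · rw [hprefix _ (by omega) (by omega), if_pos (by omega)]
  · rw [hprefix _ (by omega) (by omega), if_neg (by omega)]
    norm_num
  · rw [hprefix _ (by omega) (by omega), if_neg (by omega)]
    rfl

theorem not_startsSegment_of_two_le {l : ℕ} (hl : 2 ≤ l) (z : Fin (n + 1) × Fin (n + 1)) :
    ¬ StartsSegment (rotateBoth (n + 1)) (signOf (n + 1) 1) l z := by
  rintro ⟨-, t, -, ht, -, -, -, j₀, hj₀, hsum⟩
  rw [minimalPeriod_rotateBoth] at ht
  have hbound := neg_one_le_sum_range_signOf_rotateBoth_pow (m := j₀ + 1) (by omega) z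
  omega

theorem existsUnique_startsSegment_one (hx : x.1 ≠ x.2) :
    ∃! k, k < minimalPeriod (rotateBoth (n + 1)) x ∧
      StartsSegment (rotateBoth (n + 1)) (signOf (n + 1) 1) 1 ((rotateBoth (n + 1) ^ k) x) := by
  simp only [minimalPeriod_rotateBoth, startsSegment_one_iff,
    signOf_rotateBoth_pow_eq_neg_one_iff hx]
  refine ⟨(-x.2).val, ⟨Fin.is_lt _, Fin.cast_val_eq_self _⟩, fun k ⟨hk, hkx⟩ => ?_⟩
  rw [← hkx, Fin.val_natCast, Nat.mod_eq_of_lt hk]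

theorem card_startsSegment_one :
    Nat.card {z // StartsSegment (rotateBoth (n + 1)) (signOf (n + 1) 1) 1 z} = n := by
  simp only [startsSegment_one_iff, signOf_eq_neg_one_iff]
  rw [Nat.card_congr (Equiv.subtypeProdEquivProd (p := (· ≠ 0)) (q := (· = 0))), Nat.card_prod]
  simp [Nat.card_eq_fintype_card]

theorem gammaSeq_rotateBoth {m : ℕ} (hm : 1 ≤ m) :
    gammaSeq (rotateBoth (n + 1)) (signOf (n + 1) 1) m = n := by
  rw [gammaSeq, sum_eq_single_of_mem 1 (by simpa using hm), card_startsSegment_one]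
  intro l hl hl₁
  have : IsEmpty {z // StartsSegment (rotateBoth (n + 1)) (signOf (n + 1) 1) l z} :=
    ⟨fun z => not_startsSegment_of_two_le (by simp at hl; omega) z.1 z.2⟩
  exact Nat.card_of_isEmpty

end RotateBoth

theorem gammaSeq_d_eq_one_general (c : ℕ)
    (π : Equiv.Perm (Fin (c + 1)))
    (hπ : ∀ i : Fin (c + 1), (π i).val = (i.val + 1) % (c + 1)) :
    (∀ x : Fin (c + 1) × Fin (c + 1),
      ((∀ i : ℕ, signOf (c + 1) 1 (((Equiv.prodCongr π π) ^ i) x) = 0) ↔ x.1 = x.2)) ∧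
    (∀ x y : Fin (c + 1) × Fin (c + 1), x.1 = x.2 → y.1 = y.2 →
      ∃ i : ℕ, ((Equiv.prodCongr π π) ^ i) x = y) ∧
    (∀ x : Fin (c + 1) × Fin (c + 1), x.1 ≠ x.2 →
      ((Finset.range (Function.minimalPeriod (⇑(Equiv.prodCongr π π)) x)).filter
          (fun i => signOf (c + 1) 1 (((Equiv.prodCongr π π) ^ i) x) = 1)).card = 1 ∧
      ((Finset.range (Function.minimalPeriod (⇑(Equiv.prodCongr π π)) x)).filter
          (fun i => signOf (c + 1) 1 (((Equiv.prodCongr π π) ^ i) x) = -1)).card = 1 ∧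
      OrbitCircularOfLevel (Equiv.prodCongr π π) (signOf (c + 1) 1) 1 x ∧
      (∃! i : ℕ, i < Function.minimalPeriod (⇑(Equiv.prodCongr π π)) x ∧
        StartsSegment (Equiv.prodCongr π π) (signOf (c + 1) 1) 1
          (((Equiv.prodCongr π π) ^ i) x)) ∧
      (∀ n : ℕ, 2 ≤ n → ∀ i : ℕ,
        ¬ StartsSegment (Equiv.prodCongr π π) (signOf (c + 1) 1) n
          (((Equiv.prodCongr π π) ^ i) x))) ∧
    (∀ m : ℕ, 1 ≤ m →
      gammaSeq (Equiv.prodCongr π π) (signOf (c + 1) 1) m = c) := by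
  obtain rfl : π = finRotate (c + 1) :=
    Equiv.ext fun i => Fin.ext <| by
      rw [hπ, finRotate_apply, Fin.val_add, Fin.val_one', Nat.add_mod_mod]
  exact ⟨fun _ => signOf_rotateBoth_pow_eq_zero_iff, fun _ _ => exists_rotateBoth_pow_apply_eq,
    fun _ hx => ⟨card_filter_signOf_rotateBoth_pow_eq_one hx,
      card_filter_signOf_rotateBoth_pow_eq_neg_one hx, orbitCircularOfLevel_one hx,
      existsUnique_startsSegment_one hx, fun _ hl _ => not_startsSegment_of_two_le hl _⟩,
    fun _ => gammaSeq_rotateBoth⟩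

/-- Let `h = c + 1` (`d = 1`, `c ≥ 1`) and let `π` be the `h`-cycle `i ↦ i + 1 (mod h)`.
Consider the orbits of `(π, π)` on `{1,…,h}²` with the sign sequence `ε` attached to
`d = 1`.  Then: the orbits with identically zero sign sequence are exactly the diagonal,
which forms a single orbit; every non-diagonal orbit has exactly one entry `1` and one
entry `-1` in its cyclic sign sequence, is circular of level `1`, and carries exactly
one free linear segment, which has level `1`.  Consequently
`γ(m) = ∑_O ∑_{n=1}^m a_n(O) = h - 1 = c` for all `m ≥ 1`. -/
theorem gammaSeq_d_eq_one (c : ℕ) (hc : 1 ≤ c)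
    (π : Equiv.Perm (Fin (c + 1)))
    (hπ : ∀ i : Fin (c + 1), (π i).val = (i.val + 1) % (c + 1)) :
    (∀ x : Fin (c + 1) × Fin (c + 1),
      ((∀ i : ℕ, signOf (c + 1) 1 (((Equiv.prodCongr π π) ^ i) x) = 0) ↔ x.1 = x.2)) ∧
    (∀ x y : Fin (c + 1) × Fin (c + 1), x.1 = x.2 → y.1 = y.2 →
      ∃ i : ℕ, ((Equiv.prodCongr π π) ^ i) x = y) ∧
    (∀ x : Fin (c + 1) × Fin (c + 1), x.1 ≠ x.2 →
      ((Finset.range (Function.minimalPeriod (⇑(Equiv.prodCongr π π)) x)).filter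
          (fun i => signOf (c + 1) 1 (((Equiv.prodCongr π π) ^ i) x) = 1)).card = 1 ∧
      ((Finset.range (Function.minimalPeriod (⇑(Equiv.prodCongr π π)) x)).filter
          (fun i => signOf (c + 1) 1 (((Equiv.prodCongr π π) ^ i) x) = -1)).card = 1 ∧
      OrbitCircularOfLevel (Equiv.prodCongr π π) (signOf (c + 1) 1) 1 x ∧
      (∃! i : ℕ, i < Function.minimalPeriod (⇑(Equiv.prodCongr π π)) x ∧
        StartsSegment (Equiv.prodCongr π π) (signOf (c + 1) 1) 1
          (((Equiv.prodCongr π π) ^ i) x)) ∧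
      (∀ n : ℕ, 2 ≤ n → ∀ i : ℕ,
        ¬ StartsSegment (Equiv.prodCongr π π) (signOf (c + 1) 1) n
          (((Equiv.prodCongr π π) ^ i) x))) ∧
    (∀ m : ℕ, 1 ≤ m →
      gammaSeq (Equiv.prodCongr π π) (signOf (c + 1) 1) m = c) :=
  gammaSeq_d_eq_one_general c π hπ
end
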